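/- arXiv:0801.3376 — 2 statements merged into one kernel-verified Lean document; each statement's English description precedes it below -/
import Mathlib

section
/- For $0<q<1$, integer $n \ge 0$ and $\beta_{n,\mu}$ as defined, the weighted trace identity $q^n \sum_{\mu=0}^n q^{-2\mu}\beta_{n,\mu}\, c^{*\mu}a^{*\,n-\mu}a^{n-\mu}c^{\mu} = q^n$ holds in $\mathcal{A}(SU_q(2))$; i.e., $\mathrm{Tr}\big(\mathfrak{p}^{(n)}\,\mathrm{diag}(q^{n-2\mu})_{\mu=0}^n\big) = q^n$ (the quantum trace of the projection $\mathfrak{p}^{(n)}$ equals $q^n$). -/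
/-!
Put `x = c⋆ c` and `Q = q⁻²`. The relations give `x a = Q a x` and `a⋆ a = 1 - x`, so
`a⋆ᵏ aᵏ = ∏_{i<k} (1 - Qⁱ x)` (a `Q`-Pochhammer symbol in `x`), and since `c` commutes with
`x`, each summand is `x^μ (x; Q)_{n-μ}`. Up to the factor `qⁿ`, the coefficient
`q^{-2μ} β_{n,μ}` is the Gaussian binomial `[n, μ]_Q`, so the claim is the image under `X ↦ x`
of the polynomial identity `∑_μ [n, μ]_Q X^μ (X; Q)_{n-μ} = 1`, a `Q`-analogue of
`∑ (n choose μ) X^μ (1 - X)^{n-μ} = 1` that follows by induction on `n` from the `Q`-Pascal rule.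
-/

/-- The coefficient `β_{n,μ}` of the monopole projection. -/
noncomputable def betaCoef (q : ℝ) (n μ : ℕ) : ℝ :=
  q ^ (2 * μ) * ∏ j ∈ Finset.range μ,
    (1 - q ^ (-(2 * ((n : ℤ) - j)))) / (1 - q ^ (-(2 * ((j : ℤ) + 1))))

open Finset Polynomial

section GaussBinom

variable {K : Type*} [Field K] (Q : K)

noncomputable def gaussBinom (n k : ℕ) : K :=
  ∏ j ∈ range k, (1 - Q ^ (n - j)) / (1 - Q ^ (j + 1))

@[simp]
theorem gaussBinom_zero_right (n : ℕ) : gaussBinom Q n 0 = 1 := by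
  simp [gaussBinom]

@[simp]
theorem gaussBinom_succ_self (n : ℕ) : gaussBinom Q n (n + 1) = 0 :=
  prod_eq_zero (self_mem_range_succ n) (by simp)

theorem gaussBinom_succ_right (n k : ℕ) :
    gaussBinom Q n (k + 1) = gaussBinom Q n k * ((1 - Q ^ (n - k)) / (1 - Q ^ (k + 1))) :=
  prod_range_succ _ _

theorem gaussBinom_succ_succ_eq_mul (n k : ℕ) :
    gaussBinom Q (n + 1) (k + 1) =
      gaussBinom Q n k * ((1 - Q ^ (n + 1)) / (1 - Q ^ (k + 1))) := by
  simp only [gaussBinom, prod_div_distrib]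
  rw [prod_range_succ' (fun j => 1 - Q ^ (n + 1 - j)), prod_range_succ (fun j => 1 - Q ^ (j + 1))]
  simp only [Nat.add_sub_add_right, Nat.sub_zero]
  rw [mul_div_mul_comm]

theorem gaussBinom_succ_succ {n k : ℕ} (hk : k ≤ n) (hQ : Q ^ (k + 1) ≠ 1) :
    gaussBinom Q (n + 1) (k + 1) = gaussBinom Q n (k + 1) + Q ^ (n - k) * gaussBinom Q n k := by
  have hpow : Q ^ (n - k) * Q ^ (k + 1) = Q ^ (n + 1) := by
    rw [← pow_add]; congr 1; omega
  have hden : 1 - Q ^ (k + 1) ≠ 0 := sub_ne_zero.mpr hQ.symm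
  rw [gaussBinom_succ_succ_eq_mul, gaussBinom_succ_right]
  field_simp
  linear_combination gaussBinom Q n k * hpow

end GaussBinom

section QPochhammer

variable {R : Type*} [CommRing R] (Q : R)

noncomputable def qPochhammer (k : ℕ) : R[X] :=
  ∏ i ∈ range k, (1 - C (Q ^ i) * X)

@[simp]
theorem qPochhammer_zero : qPochhammer Q 0 = 1 := prod_range_zero _

theorem qPochhammer_succ (k : ℕ) :
    qPochhammer Q (k + 1) = qPochhammer Q k * (1 - C (Q ^ k) * X) :=
  prod_range_succ _ _

theorem X_pow_mul_qPochhammer_sub_eq {n k : ℕ} (hk : k ≤ n) :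
    X ^ k * qPochhammer Q (n - k) =
      X ^ k * qPochhammer Q (n + 1 - k) +
        C (Q ^ (n - k)) * (X ^ (k + 1) * qPochhammer Q (n - k)) := by
  rw [Nat.sub_add_comm hk, qPochhammer_succ]
  ring

end QPochhammer

theorem sum_gaussBinom_mul_qPochhammer {K : Type*} [Field K] {Q : K}
    (hQ : ∀ k : ℕ, Q ^ (k + 1) ≠ 1) :
    ∀ n : ℕ, ∑ k ∈ range (n + 1), C (gaussBinom Q n k) * (X ^ k * qPochhammer Q (n - k)) = 1
  | 0 => by simp
  | n + 1 => by
    set T : ℕ → ℕ → K[X] := fun m k => X ^ k * qPochhammer Q (m - k) with hT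
    calc ∑ k ∈ range (n + 2), C (gaussBinom Q (n + 1) k) * T (n + 1) k
        = ∑ k ∈ range (n + 1), (C (gaussBinom Q n (k + 1)) * T (n + 1) (k + 1)
              + C (gaussBinom Q n k) * (C (Q ^ (n - k)) * T (n + 1) (k + 1)))
            + C (gaussBinom Q n 0) * T (n + 1) 0 := by
          rw [sum_range_succ', gaussBinom_zero_right, gaussBinom_zero_right]
          refine congrArg (· + _) (sum_congr rfl fun k hk => ?_)
          rw [gaussBinom_succ_succ Q (Nat.lt_succ_iff.mp (mem_range.mp hk)) (hQ k)]
          simp only [C_add, C_mul]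
          ring
      _ = ∑ k ∈ range (n + 1), (C (gaussBinom Q n k) * T (n + 1) k
              + C (gaussBinom Q n k) * (C (Q ^ (n - k)) * T (n + 1) (k + 1))) := by
          rw [sum_add_distrib, sum_add_distrib, add_right_comm,
            ← sum_range_succ' (fun k => C (gaussBinom Q n k) * T (n + 1) k),
            sum_range_succ, gaussBinom_succ_self, C_0, zero_mul, add_zero]
      _ = ∑ k ∈ range (n + 1), C (gaussBinom Q n k) * T n k := by
          refine sum_congr rfl fun k hk => ?_
          rw [← mul_add, hT]
          dsimp only
          rw [Nat.add_sub_add_right,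
            ← X_pow_mul_qPochhammer_sub_eq Q (Nat.lt_succ_iff.mp (mem_range.mp hk))]
      _ = 1 := sum_gaussBinom_mul_qPochhammer hQ n

section Algebra

variable {R A : Type*} [CommRing R] [Ring A] [Algebra R A] {Q : R} {a x : A}

theorem mul_pow_eq_smul_pow_mul (h : x * a = Q • (a * x)) :
    ∀ k : ℕ, x * a ^ k = Q ^ k • (a ^ k * x)
  | 0 => by simp
  | k + 1 => by
    rw [pow_succ, ← mul_assoc, mul_pow_eq_smul_pow_mul h k, smul_mul_assoc, mul_assoc, h,
      mul_smul_comm, smul_smul, ← pow_succ, ← mul_assoc, ← pow_succ]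

theorem pow_mul_pow_eq_aeval_qPochhammer {b : A} (hba : b * a = 1 - x)
    (hxa : x * a = Q • (a * x)) : ∀ k : ℕ, b ^ k * a ^ k = aeval x (qPochhammer Q k)
  | 0 => by simp
  | k + 1 => by
    have hmove : (1 - x) * a ^ k = a ^ k * (1 - Q ^ k • x) := by
      rw [sub_mul, mul_sub, one_mul, mul_one, mul_pow_eq_smul_pow_mul hxa, mul_smul_comm]
    calc b ^ (k + 1) * a ^ (k + 1) = b ^ k * ((1 - x) * a ^ k) := by
          rw [pow_succ, pow_succ', mul_assoc, ← mul_assoc b, hba]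
      _ = aeval x (qPochhammer Q (k + 1)) := by
          rw [hmove, ← mul_assoc, pow_mul_pow_eq_aeval_qPochhammer hba hxa k, qPochhammer_succ,
            map_mul, map_sub, map_one, map_mul, aeval_C, aeval_X, Algebra.smul_def]

end Algebra

theorem pow_mul_mul_pow_of_commute {M : Type*} [Monoid M] {d c m : M} (hdc : Commute d c)
    (hcm : Commute c m) (k : ℕ) : d ^ k * m * c ^ k = (d * c) ^ k * m := by
  rw [mul_assoc, ← (hcm.pow_left k).eq, ← mul_assoc, hdc.mul_pow]

theorem zpow_neg_mul_betaCoef {q : ℝ} (hq : q ≠ 0) {n μ : ℕ} (hμ : μ ≤ n) :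
    q ^ (-(2 * (μ : ℤ))) * betaCoef q n μ = gaussBinom (q ^ 2)⁻¹ n μ := by
  have hpow : ∀ m : ℕ, q ^ (-(2 * (m : ℤ))) = ((q ^ 2)⁻¹) ^ m := fun m => by
    rw [zpow_neg, zpow_mul, zpow_natCast, zpow_ofNat, inv_pow]
  rw [betaCoef, hpow, pow_mul, ← mul_assoc, ← mul_pow, inv_mul_cancel₀ (pow_ne_zero 2 hq),
    one_pow, one_mul, gaussBinom]
  refine prod_congr rfl fun j hj => ?_
  have hjn : j ≤ n := (mem_range.mp hj).le.trans hμ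
  rw [← Nat.cast_sub hjn, ← Nat.cast_succ, hpow, hpow]

theorem quantum_trace_of_projection_general (q : ℝ) (hq0 : 0 < q) (hq1 : q < 1)
    (A : Type*) [Ring A] [StarRing A] [Algebra ℝ A]
    (a c : A)
    (h1 : a * c = q • (c * a))
    (h2 : a * star c = q • (star c * a))
    (h3 : c * star c = star c * c)
    (h4 : star a * a + star c * c = 1)
    (n : ℕ) :
    (∑ μ ∈ Finset.range (n + 1),
        (q ^ (n : ℤ) * q ^ (-(2 * (μ : ℤ))) * betaCoef q n μ) •
          ((star c) ^ μ * (star a) ^ (n - μ) * a ^ (n - μ) * c ^ μ))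
      = (q ^ (n : ℤ)) • (1 : A) := by
  set x := star c * c
  set Q := (q ^ 2)⁻¹
  have hQ : ∀ k : ℕ, Q ^ (k + 1) ≠ 1 := fun k =>
    (one_lt_pow₀ ((one_lt_inv₀ (by positivity)).mpr (by nlinarith)) k.succ_ne_zero).ne'
  have hxa : x * a = Q • (a * x) := by
    have hax : a * x = q ^ 2 • (x * a) := by
      rw [← mul_assoc, h2, smul_mul_assoc, mul_assoc, h1, mul_smul_comm, smul_smul, ← mul_assoc,
        sq]
    rw [hax, smul_smul, inv_mul_cancel₀ (by positivity), one_smul]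
  have hcx : Commute c x := (show Commute c (star c) from h3).mul_right (Commute.refl c)
  have hterm : ∀ μ ∈ range (n + 1),
      (q ^ (n : ℤ) * q ^ (-(2 * (μ : ℤ))) * betaCoef q n μ) •
          ((star c) ^ μ * (star a) ^ (n - μ) * a ^ (n - μ) * c ^ μ)
        = q ^ (n : ℤ) • aeval x (C (gaussBinom Q n μ) * (X ^ μ * qPochhammer Q (n - μ))) := by
    intro μ hμ
    have hcP : Commute c (aeval x (qPochhammer Q (n - μ))) :=
      Algebra.commute_of_mem_adjoin_singleton_of_commute (aeval_mem_adjoin_singleton ℝ x) hcx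
    rw [mul_assoc (star c ^ μ), pow_mul_pow_eq_aeval_qPochhammer (eq_sub_of_add_eq h4) hxa,
      pow_mul_mul_pow_of_commute h3.symm hcP, mul_assoc,
      zpow_neg_mul_betaCoef hq0.ne' (Nat.lt_succ_iff.mp (mem_range.mp hμ)), mul_smul,
      map_mul, map_mul, aeval_C, aeval_X_pow, Algebra.smul_def (gaussBinom Q n μ)]
  rw [sum_congr rfl hterm, ← smul_sum, ← map_sum, sum_gaussBinom_mul_qPochhammer hQ n, map_one]

theorem quantum_trace_of_projection (q : ℝ) (hq0 : 0 < q) (hq1 : q < 1)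
    (A : Type*) [Ring A] [StarRing A] [Algebra ℝ A] [StarModule ℝ A]
    (a c : A)
    (h1 : a * c = q • (c * a))
    (h2 : a * star c = q • (star c * a))
    (h3 : c * star c = star c * c)
    (h4 : star a * a + star c * c = 1)
    (h5 : a * star a + (q ^ 2) • (c * star c) = 1)
    (n : ℕ) :
    (∑ μ ∈ Finset.range (n + 1),
        (q ^ (n : ℤ) * q ^ (-(2 * (μ : ℤ))) * betaCoef q n μ) •
          ((star c) ^ μ * (star a) ^ (n - μ) * a ^ (n - μ) * c ^ μ))
      = (q ^ (n : ℤ)) • (1 : A) :=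
  quantum_trace_of_projection_general q hq0 hq1 A a c h1 h2 h3 h4 n
end

section
/- For $0<q<1$, $[x]=(q^x-q^{-x})/(q-q^{-1})$, half-integer $J$, and integer $n$ with $J \ge |n|/2$, the relation $q^{n+1}\lambda_{n,J} = \left([J+\tfrac12]^2 - \tfrac14\right) + \tfrac14 - \tfrac12\left([\tfrac{n+1}{2}]^2 + [\tfrac{n-1}{2}]^2\right)$ holds, where $\lambda_{n,J} = q^{-n-1}\left([J-\tfrac{n}{2}][J+\tfrac{n}{2}+1] + \tfrac12[n]\right)$. -/
/-- The q-number `[x] = (q^x - q^{-x})/(q - q⁻¹)` (real exponents via `rpow`). -/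
noncomputable def qNum (q x : ℝ) : ℝ := (q ^ x - q ^ (-x)) / (q - q⁻¹)

/-- Eigenvalue of the gauged Laplacian on the spin-`J` part of the charge-`n` line bundle. -/
noncomputable def gaugedEigenvalue (q : ℝ) (n : ℤ) (J : ℝ) : ℝ :=
  q ^ (-(n : ℝ) - 1) * (qNum q (J - (n : ℝ) / 2) * qNum q (J + (n : ℝ) / 2 + 1)
    + (1 / 2) * qNum q n)

private theorem tst (q : ℝ) (s t W : ℝ) (hQ : q - q⁻¹ ≠ 0)
    (hq : q ≠ 0) (hs : s ≠ 0) (ht : t ≠ 0) (hW : W ≠ 0) (hw2 : W * W = q) :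
    t*t*q * ((t*t*q)⁻¹ * ((s/t - t/s)/(q-q⁻¹) * ((s*t*q - (s*t*q)⁻¹)/(q-q⁻¹)) + 1/2*((t*t - (t*t)⁻¹)/(q-q⁻¹))))
      = (((s*W - (s*W)⁻¹)/(q-q⁻¹))^2 - 1/4) + 1/4
        - 1/2*(((t*W - (t*W)⁻¹)/(q-q⁻¹))^2 + ((t/W - W/t)/(q-q⁻¹))^2) := by
  subst hw2
  have h4 : W^4 - 1 ≠ 0 := by
    intro h
    apply hQ
    have : W^4 = 1 := by linarith
    field_simp
    nlinarith [this]
  have key : W*W - (W*W)⁻¹ = (W^4 - 1)/(W^2) := by field_simp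
  rw [key]
  field_simp
  ring

theorem gauged_laplacian_casimir_relation (q : ℝ) (hq0 : 0 < q) (hq1 : q < 1)
    (n : ℤ) (J : ℝ) (hJ : ∃ k : ℕ, J = (k : ℝ) / 2) (hJn : |(n : ℝ)| / 2 ≤ J) :
    q ^ ((n : ℝ) + 1) * gaugedEigenvalue q n J
      = (qNum q (J + 1 / 2) ^ 2 - 1 / 4) + 1 / 4
        - (1 / 2) * (qNum q (((n : ℝ) + 1) / 2) ^ 2 + qNum q (((n : ℝ) - 1) / 2) ^ 2) := by
  have hQ : q - q⁻¹ ≠ 0 := by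
    have hmul : q * (q - q⁻¹) = q * q - 1 := by field_simp
    intro h; rw [h, mul_zero] at hmul; nlinarith
  set s := q ^ J with hsdef
  set t := q ^ ((n:ℝ)/2) with htdef
  set W := q ^ ((1:ℝ)/2) with hWdef
  have hs : s ≠ 0 := (Real.rpow_pos_of_pos hq0 _).ne'
  have ht : t ≠ 0 := (Real.rpow_pos_of_pos hq0 _).ne'
  have hW : W ≠ 0 := (Real.rpow_pos_of_pos hq0 _).ne'
  have hw2 : W * W = q := by
    rw [hWdef, ← Real.rpow_add hq0]; norm_num
  have e7 : q ^ ((n:ℝ)) = t * t := by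
    rw [htdef, ← Real.rpow_add hq0]; norm_num
  have e1 : q ^ ((n:ℝ) + 1) = t * t * q := by
    rw [Real.rpow_add hq0, Real.rpow_one, e7]
  have e2 : q ^ (-(n:ℝ) - 1) = (t * t * q)⁻¹ := by
    rw [show -(n:ℝ) - 1 = -((n:ℝ) + 1) by ring, Real.rpow_neg hq0.le, e1]
  have e3 : q ^ (J - (n:ℝ)/2) = s / t := Real.rpow_sub hq0 _ _
  have e4 : q ^ (-(J - (n:ℝ)/2)) = t / s := by
    rw [show -(J - (n:ℝ)/2) = (n:ℝ)/2 - J by ring, Real.rpow_sub hq0]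
  have e5 : q ^ (J + (n:ℝ)/2 + 1) = s * t * q := by
    rw [Real.rpow_add hq0, Real.rpow_add hq0, Real.rpow_one]
  have e6 : q ^ (-(J + (n:ℝ)/2 + 1)) = (s * t * q)⁻¹ := by
    rw [Real.rpow_neg hq0.le, e5]
  have e8 : q ^ (-(n:ℝ)) = (t * t)⁻¹ := by
    rw [Real.rpow_neg hq0.le, e7]
  have e9 : q ^ (J + 1/2) = s * W := by
    rw [Real.rpow_add hq0]
  have e10 : q ^ (-(J + 1/2)) = (s * W)⁻¹ := by
    rw [Real.rpow_neg hq0.le, e9]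
  have e11 : q ^ (((n:ℝ) + 1)/2) = t * W := by
    rw [show ((n:ℝ) + 1)/2 = (n:ℝ)/2 + 1/2 by ring, Real.rpow_add hq0]
  have e12 : q ^ (-(((n:ℝ) + 1)/2)) = (t * W)⁻¹ := by
    rw [Real.rpow_neg hq0.le, e11]
  have e13 : q ^ (((n:ℝ) - 1)/2) = t / W := by
    rw [show ((n:ℝ) - 1)/2 = (n:ℝ)/2 - 1/2 by ring, Real.rpow_sub hq0]
  have e14 : q ^ (-(((n:ℝ) - 1)/2)) = W / t := by
    rw [show -(((n:ℝ) - 1)/2) = 1/2 - (n:ℝ)/2 by ring, Real.rpow_sub hq0]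
  simp only [gaugedEigenvalue, qNum]
  rw [e1, e2, e3, e4, e5, e6, e7, e8, e9, e10, e11, e12, e13, e14]
  exact tst q s t W hQ hq0.ne' hs ht hW hw2
end
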